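/- arXiv:2211.12813 — 5 statements merged into one kernel-verified Lean document; each statement's English description precedes it below -/
import Mathlib

section
/- Let G be a finite connected k-regular simple graph, fix an arbitrary orientation of its edges so each edge e has an origin e⁻ and extremity e⁺, and let g : V → ℝ. Set B_g = Σ_{e ∈ E} |g(e⁺)² − g(e⁻)²|, let ‖g‖ be the ℓ² norm of g on V, and let ‖dg‖ be the ℓ² norm on E of the function dg(e) = g(e⁺) − g(e⁻). Then B_g ≤ √(2k) · ‖dg‖ · ‖g‖. -/
open scoped Classical

/-- The "colour distance" between two vertices under a colouring `f`. -/
def hDist {V : Type*} (f : V → ℕ) (u v : V) : ℕ := ((f u : ℤ) - (f v : ℤ)).natAbs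

/-- An `L(h,k)`-colouring of the hypergraph with edge family `E`. -/
def IsLColoring {V : Type*} (E : Finset (Finset V)) (h k : ℕ) (f : V → ℕ) : Prop :=
  (∀ u v : V, u ≠ v → (∃ e ∈ E, u ∈ e ∧ v ∈ e) → h ≤ hDist f u v) ∧
  (∀ u v : V, u ≠ v →
    (∃ e₁ ∈ E, ∃ e₂ ∈ E, u ∈ e₁ ∧ v ∈ e₂ ∧ ((e₁ ∩ e₂) \ {u, v}).Nonempty) →
    k ≤ hDist f u v)

/-- The span of a colouring: maximum colour minus minimum colour. -/
noncomputable def hSpan {V : Type*} [Fintype V] (f : V → ℕ) : ℕ :=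
  Finset.univ.sup f - sInf (Set.range f)

/-- The `L(h,k)`-chromatic number of a hypergraph. -/
noncomputable def lamL {V : Type*} [Fintype V] (E : Finset (Finset V)) (h k : ℕ) : ℕ :=
  sInf {s | ∃ f : V → ℕ, IsLColoring E h k f ∧ hSpan f = s}

/-- A simple hypergraph: edges have cardinality at least 2, and no edge contains another. -/
def HSimple {V : Type*} (E : Finset (Finset V)) : Prop :=
  (∀ e ∈ E, 2 ≤ e.card) ∧ ∀ e₁ ∈ E, ∀ e₂ ∈ E, e₁ ⊆ e₂ → e₁ = e₂

/-- Degree of a vertex in a hypergraph. -/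
noncomputable def hDeg {V : Type*} (E : Finset (Finset V)) (v : V) : ℕ :=
  (E.filter (fun e => v ∈ e)).card

/-- The 2-section of a hypergraph. -/
def twoSection {V : Type*} (E : Finset (Finset V)) : SimpleGraph V where
  Adj u v := u ≠ v ∧ ∃ e ∈ E, u ∈ e ∧ v ∈ e
  symm := by
    constructor
    rintro u v ⟨huv, e, he, hu, hv⟩
    exact ⟨huv.symm, e, he, hv, hu⟩
  loopless := by
    constructor
    rintro u ⟨h, -⟩
    exact h rfl
/-- An `L(h,k)`-colouring of a simple graph. -/
def IsGLColoring {V : Type*} (G : SimpleGraph V) (h k : ℕ) (f : V → ℕ) : Prop :=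
  (∀ u v : V, G.Adj u v → h ≤ hDist f u v) ∧
  (∀ u v : V, G.dist u v = 2 → k ≤ hDist f u v)

/-- The `L(h,k)`-chromatic number of a simple graph. -/
noncomputable def lamG {V : Type*} [Fintype V] (G : SimpleGraph V) (h k : ℕ) : ℕ :=
  sInf {s | ∃ f : V → ℕ, IsGLColoring G h k f ∧ hSpan f = s}

/-- The edge boundary of a vertex set `F`: edges with exactly one endpoint in `F`. -/
def graphBoundary {V : Type*} (G : SimpleGraph V) (F : Finset V) : Set (Sym2 V) :=
  {e | e ∈ G.edgeSet ∧ ∃ a b, e = s(a, b) ∧ a ∈ F ∧ b ∉ F}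

/-- The expansion (isoperimetric) constant of a graph. -/
noncomputable def expansion {V : Type*} [Fintype V] (G : SimpleGraph V) : ℝ :=
  sInf {r : ℝ | ∃ F : Finset V, 0 < F.card ∧ 2 * F.card ≤ Fintype.card V ∧
      r = (graphBoundary G F).ncard / F.card}

/-! Factor `g(e⁺)² − g(e⁻)² = dg(e) · (g(e⁺) + g(e⁻))` and apply Cauchy–Schwarz over the edges.
Since `(a + b)² ≤ 2(a² + b²)` and every vertex is an endpoint of exactly `k` edges,
`Σ_e (g(e⁺) + g(e⁻))² ≤ 2 Σ_e (g(e⁻)² + g(e⁺)²) = 2k ‖g‖²`. -/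

theorem Real.sum_abs_sq_sub_sq_le {ι : Type*} (s : Finset ι) (f g : ι → ℝ) :
    ∑ i ∈ s, |f i ^ 2 - g i ^ 2| ≤
      √(∑ i ∈ s, (f i - g i) ^ 2) * √(∑ i ∈ s, (f i + g i) ^ 2) := by
  have hfactor : ∀ i ∈ s, |f i ^ 2 - g i ^ 2| = |f i - g i| * |f i + g i| := fun i _ => by
    rw [← abs_mul]; ring_nf
  rw [Finset.sum_congr rfl hfactor]
  simpa only [sq_abs] using
    Real.sum_mul_le_sqrt_mul_sqrt s (fun i => |f i - g i|) (fun i => |f i + g i|)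

namespace SimpleGraph

variable {V : Type*}

def IsOrientation (G : SimpleGraph V) (D : Finset (V × V)) : Prop :=
  Set.BijOn (fun p : V × V => s(p.1, p.2)) ↑D G.edgeSet

variable {G : SimpleGraph V} {D : Finset (V × V)}

namespace IsOrientation

theorem fst_ne_snd (hD : G.IsOrientation D) {p : V × V} (hp : p ∈ D) : p.1 ≠ p.2 :=
  G.ne_of_adj (hD.mapsTo hp)

theorem card_filter_incident [Fintype V] (hD : G.IsOrientation D) (x : V) :
    (D.filter fun p => x = p.1 ∨ x = p.2).card = G.degree x := by
  rw [← card_incidenceFinset_eq_degree]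
  refine Finset.card_bij (fun p _ => s(p.1, p.2)) ?_ ?_ ?_
  · intro p hp
    rw [Finset.mem_filter] at hp
    exact (mem_incidenceFinset _ _ _).2 ⟨hD.mapsTo hp.1, Sym2.mem_iff.2 hp.2⟩
  · intro p hp q hq hpq
    exact hD.injOn (Finset.mem_filter.1 hp).1 (Finset.mem_filter.1 hq).1 hpq
  · intro e he
    rw [mem_incidenceFinset] at he
    obtain ⟨p, hp, rfl⟩ := hD.surjOn he.1
    exact ⟨p, Finset.mem_filter.2 ⟨hp, Sym2.mem_iff.1 he.2⟩, rfl⟩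

theorem sum_fst_add_snd [Fintype V] (hD : G.IsOrientation D) (f : V → ℝ) :
    ∑ p ∈ D, (f p.1 + f p.2) = ∑ x, G.degree x * f x := by
  have hendpoints : ∀ p ∈ D, f p.1 + f p.2 = ∑ x, if x = p.1 ∨ x = p.2 then f x else 0 := by
    intro p hp
    have hpair : (Finset.univ.filter fun x => x = p.1 ∨ x = p.2) = {p.1, p.2} := by
      ext x; simp
    rw [← Finset.sum_filter, hpair, Finset.sum_pair (hD.fst_ne_snd hp)]
  rw [Finset.sum_congr rfl hendpoints, Finset.sum_comm]
  refine Finset.sum_congr rfl fun x _ => ?_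
  rw [← Finset.sum_filter, Finset.sum_const, hD.card_filter_incident, nsmul_eq_mul]

theorem sum_add_sq_le [Fintype V] {k : ℕ} (hD : G.IsOrientation D)
    (hreg : G.IsRegularOfDegree k) (g : V → ℝ) :
    ∑ p ∈ D, (g p.2 + g p.1) ^ 2 ≤ 2 * k * ∑ x, g x ^ 2 :=
  calc ∑ p ∈ D, (g p.2 + g p.1) ^ 2
      ≤ ∑ p ∈ D, 2 * (g p.1 ^ 2 + g p.2 ^ 2) :=
        Finset.sum_le_sum fun p _ => by rw [add_comm (g p.1 ^ 2)]; exact add_sq_le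
    _ = 2 * k * ∑ x, g x ^ 2 := by
        rw [← Finset.mul_sum, hD.sum_fst_add_snd (fun x => g x ^ 2), Finset.mul_sum,
          Finset.mul_sum]
        simp only [hreg.degree_eq, mul_assoc]

end IsOrientation

end SimpleGraph

theorem Bg_le_sqrt_two_k_mul_general {V : Type*} [Fintype V] (G : SimpleGraph V) (k : ℕ)
    (hreg : G.IsRegularOfDegree k)
    (D : Finset (V × V))
    (horient : Set.BijOn (fun p : V × V => s(p.1, p.2)) ↑D G.edgeSet)
    (g : V → ℝ) :
    ∑ p ∈ D, |g p.2 ^ 2 - g p.1 ^ 2| ≤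
      Real.sqrt (2 * k) * Real.sqrt (∑ p ∈ D, (g p.2 - g p.1) ^ 2) *
        Real.sqrt (∑ x : V, g x ^ 2) :=
  have hD : G.IsOrientation D := horient
  calc ∑ p ∈ D, |g p.2 ^ 2 - g p.1 ^ 2|
      ≤ √(∑ p ∈ D, (g p.2 - g p.1) ^ 2) * √(∑ p ∈ D, (g p.2 + g p.1) ^ 2) :=
        Real.sum_abs_sq_sub_sq_le D (fun p => g p.2) (fun p => g p.1)
    _ ≤ √(∑ p ∈ D, (g p.2 - g p.1) ^ 2) * √(2 * k * ∑ x, g x ^ 2) := by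
        gcongr; exact hD.sum_add_sq_le hreg g
    _ = √(2 * k) * √(∑ p ∈ D, (g p.2 - g p.1) ^ 2) * √(∑ x, g x ^ 2) := by
        rw [Real.sqrt_mul (by positivity)]; ring

/-- For a finite connected `k`-regular simple graph with an arbitrary
orientation `D` of its edges and `g : V → ℝ`:
`B_g = Σ_e |g(e⁺)² − g(e⁻)²| ≤ √(2k) · ‖dg‖ · ‖g‖`. -/
theorem Bg_le_sqrt_two_k_mul {V : Type*} [Fintype V] (G : SimpleGraph V) (k : ℕ)
    (hconn : G.Connected) (hreg : G.IsRegularOfDegree k)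
    (D : Finset (V × V))
    (horient : Set.BijOn (fun p : V × V => s(p.1, p.2)) ↑D G.edgeSet)
    (g : V → ℝ) :
    ∑ p ∈ D, |g p.2 ^ 2 - g p.1 ^ 2| ≤
      Real.sqrt (2 * k) * Real.sqrt (∑ p ∈ D, (g p.2 - g p.1) ^ 2) *
        Real.sqrt (∑ x : V, g x ^ 2) :=
  Bg_le_sqrt_two_k_mul_general G k hreg D horient g
end

section
/- Let G be a finite connected k-regular simple graph on n vertices, fix an arbitrary orientation of its edges, and let g : V → ℝ satisfy |{x ∈ V : g(x) ≠ 0}| ≤ n/2 and g(x) ≥ 0 for all x. Set B_g = Σ_{e ∈ E} |g(e⁺)² − g(e⁻)²|. Then B_g ≥ h(G) · ‖g‖², where h(G) is the expansion constant of G and ‖g‖ is the ℓ² norm of g. -/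
open scoped Classical

/-! The identity `|a - b| = ∫ 1[t ∈ (min a b, max a b]] dt` turns both `∑ g²` and `B_g` into
integrals over thresholds `t`: of the size of the superlevel set `F_t = {x | 0 < t ≤ g(x)²}` and
of the number of edges crossing level `t`. Each `F_t` lies in the support of `g`, so has at most
`n/2` vertices, and every edge of its boundary crosses level `t`; hence `h(G) |F_t|` is at most
the number of crossing edges, and integrating over `t` gives the claim. -/

open MeasureTheory Set Finset

section Coarea

variable {ι : Type*} (s : Finset ι) (lo hi : ι → ℝ)

lemma integrable_indicator_one_Ioc (a b : ℝ) :
    Integrable ((Ioc a b).indicator (1 : ℝ → ℝ)) :=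
  (integrable_indicator_iff measurableSet_Ioc).2 (integrableOn_const measure_Ioc_lt_top.ne)

lemma card_filter_mem_Ioc_eq_sum_indicator (t : ℝ) :
    (#{i ∈ s | t ∈ Ioc (lo i) (hi i)} : ℝ) =
      ∑ i ∈ s, (Ioc (lo i) (hi i)).indicator 1 t := by
  simp only [indicator_apply, Pi.one_apply, Finset.sum_boole]

lemma integrable_card_filter_mem_Ioc :
    Integrable (fun t => (#{i ∈ s | t ∈ Ioc (lo i) (hi i)} : ℝ)) := by
  simp only [card_filter_mem_Ioc_eq_sum_indicator]
  exact integrable_finsetSum _ fun i _ => integrable_indicator_one_Ioc _ _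

lemma integral_card_filter_mem_Ioc (hle : ∀ i ∈ s, lo i ≤ hi i) :
    ∫ t, (#{i ∈ s | t ∈ Ioc (lo i) (hi i)} : ℝ) = ∑ i ∈ s, (hi i - lo i) := by
  simp only [card_filter_mem_Ioc_eq_sum_indicator]
  rw [integral_finsetSum _ fun i _ => integrable_indicator_one_Ioc _ _]
  refine Finset.sum_congr rfl fun i hi' => ?_
  rw [integral_indicator_one measurableSet_Ioc, Real.volume_real_Ioc_of_le (hle i hi')]

end Coarea

lemma mem_Ioc_min_max_of_xor_mem_Ioc {t a b : ℝ} (h : Xor (t ∈ Ioc 0 a) (t ∈ Ioc 0 b)) :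
    t ∈ Ioc (min a b) (max a b) := by
  simp only [Set.mem_Ioc, min_lt_iff, le_max_iff] at h ⊢
  grind

section Expansion

variable {V : Type*} (G : SimpleGraph V)

lemma expansion_mul_card_le [Fintype V] {F : Finset V} (hF : 2 * #F ≤ Fintype.card V) :
    expansion G * #F ≤ (graphBoundary G F).ncard := by
  rcases F.eq_empty_or_nonempty with rfl | hne
  · simp
  have hpos : (0 : ℝ) < #F := by exact_mod_cast hne.card_pos
  have hle : expansion G ≤ (graphBoundary G F).ncard / #F := by
    refine csInf_le ⟨0, ?_⟩ ⟨F, hne.card_pos, hF, rfl⟩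
    rintro r ⟨F', -, -, rfl⟩
    positivity
  rwa [le_div_iff₀ hpos] at hle

lemma ncard_graphBoundary_le_card_filter {D : Finset (V × V)}
    (hD : SurjOn (fun p : V × V => s(p.1, p.2)) D G.edgeSet) (F : Finset V) :
    (graphBoundary G F).ncard ≤ #{p ∈ D | Xor (p.1 ∈ F) (p.2 ∈ F)} := by
  calc (graphBoundary G F).ncard
      ≤ (({p ∈ D | Xor (p.1 ∈ F) (p.2 ∈ F)}.image fun p : V × V => s(p.1, p.2) :
          Finset (Sym2 V)) : Set (Sym2 V)).ncard := by
        refine Set.ncard_le_ncard ?_ (Finset.finite_toSet _)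
        rintro e ⟨he, a, b, rfl, ha, hb⟩
        obtain ⟨p, hp, hpe⟩ := hD he
        refine Finset.mem_coe.2 (Finset.mem_image.2 ⟨p, Finset.mem_filter.2 ⟨hp, ?_⟩, hpe⟩)
        rcases Sym2.eq_iff.1 hpe with ⟨rfl, rfl⟩ | ⟨rfl, rfl⟩
        · exact Or.inl ⟨ha, hb⟩
        · exact Or.inr ⟨ha, hb⟩
    _ ≤ #{p ∈ D | Xor (p.1 ∈ F) (p.2 ∈ F)} := by
        rw [Set.ncard_coe_finset]
        exact Finset.card_image_le

lemma expansion_mul_card_superlevel_le_card_crossing [Fintype V] {D : Finset (V × V)}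
    (hD : SurjOn (fun p : V × V => s(p.1, p.2)) D G.edgeSet) {φ : V → ℝ}
    (hφ : 2 * (Function.support φ).ncard ≤ Fintype.card V) (t : ℝ) :
    expansion G * #{x | t ∈ Ioc 0 (φ x)} ≤
      #{p ∈ D | t ∈ Ioc (min (φ p.1) (φ p.2)) (max (φ p.1) (φ p.2))} := by
  set F : Finset V := {x | t ∈ Ioc 0 (φ x)}
  have hsmall : 2 * #F ≤ Fintype.card V := by
    have hsub : (F : Set V) ⊆ Function.support φ := fun x hx h0 => by
      simp [F, h0] at hx
      linarith [hx.1, hx.2]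
    have := Set.ncard_le_ncard hsub
    rw [Set.ncard_coe_finset] at this
    omega
  calc expansion G * #F ≤ (graphBoundary G F).ncard := expansion_mul_card_le G hsmall
    _ ≤ #{p ∈ D | Xor (p.1 ∈ F) (p.2 ∈ F)} := by
      exact_mod_cast ncard_graphBoundary_le_card_filter G hD F
    _ ≤ _ := by
      refine Nat.cast_le.2 (Finset.card_le_card (Finset.monotone_filter_right D fun p _ h => ?_))
      simp only [F, Finset.mem_filter, Finset.mem_univ, true_and] at h
      exact mem_Ioc_min_max_of_xor_mem_Ioc h

end Expansion

theorem Bg_ge_expansion_mul_normSq_general {V : Type*} [Fintype V] (G : SimpleGraph V) (n : ℕ)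
    (hn : Fintype.card V = n)
    (D : Finset (V × V))
    (horient : Set.BijOn (fun p : V × V => s(p.1, p.2)) ↑D G.edgeSet)
    (g : V → ℝ)
    (hsupp : 2 * {x : V | g x ≠ 0}.ncard ≤ n) :
    expansion G * ∑ x : V, g x ^ 2 ≤ ∑ p ∈ D, |g p.2 ^ 2 - g p.1 ^ 2| := by
  have hsmall : 2 * (Function.support fun x => g x ^ 2).ncard ≤ Fintype.card V := by
    simpa [hn, Function.support] using hsupp
  calc expansion G * ∑ x : V, g x ^ 2
      = expansion G * ∫ t, (#{x | t ∈ Ioc 0 (g x ^ 2)} : ℝ) := by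
        rw [integral_card_filter_mem_Ioc _ _ _ fun x _ => sq_nonneg (g x)]
        simp
    _ = ∫ t, expansion G * #{x | t ∈ Ioc 0 (g x ^ 2)} := (integral_const_mul _ _).symm
    _ ≤ ∫ t, (#{p ∈ D | t ∈ Ioc (min (g p.1 ^ 2) (g p.2 ^ 2))
          (max (g p.1 ^ 2) (g p.2 ^ 2))} : ℝ) :=
        integral_mono ((integrable_card_filter_mem_Ioc _ _ _).const_mul _)
          (integrable_card_filter_mem_Ioc _ _ _)
          (expansion_mul_card_superlevel_le_card_crossing G horient.surjOn hsmall)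
    _ = ∑ p ∈ D, |g p.2 ^ 2 - g p.1 ^ 2| := by
        rw [integral_card_filter_mem_Ioc _ _ _ fun p _ => min_le_max]
        simp only [max_sub_min_eq_abs]

/-- For a finite connected `k`-regular simple graph on `n` vertices with an
arbitrary orientation `D` of its edges and nonnegative `g : V → ℝ` supported on at most `n/2`
vertices: `B_g ≥ h(G) · ‖g‖²`. -/
theorem Bg_ge_expansion_mul_normSq {V : Type*} [Fintype V] (G : SimpleGraph V) (k n : ℕ)
    (hn : Fintype.card V = n)
    (hconn : G.Connected) (hreg : G.IsRegularOfDegree k)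
    (D : Finset (V × V))
    (horient : Set.BijOn (fun p : V × V => s(p.1, p.2)) ↑D G.edgeSet)
    (g : V → ℝ)
    (hsupp : 2 * {x : V | g x ≠ 0}.ncard ≤ n)
    (hpos : ∀ x : V, 0 ≤ g x) :
    expansion G * ∑ x : V, g x ^ 2 ≤ ∑ p ∈ D, |g p.2 ^ 2 - g p.1 ^ 2| :=
  Bg_ge_expansion_mul_normSq_general G n hn D horient g hsupp
end

section
/- If H is a simple hypergraph of order n with strong chromatic number χ′(H) = k′, then for any nonnegative integers h > k, λ_{h,k}(H) ≤ k(n - k′) + (k′ - 1)h. -/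
open scoped Classical

/-- The strong chromatic number of a hypergraph: the least `k` admitting a colouring with `k`
colours in which each colour class meets every edge in at most one vertex. -/
noncomputable def strongChrom {V : Type*} [Fintype V] (E : Finset (Finset V)) : ℕ :=
  sInf {k | ∃ C : V → Fin k, ∀ e ∈ E, ∀ u ∈ e, ∀ v ∈ e, u ≠ v → C u ≠ C v}

/- Colour the vertices class by class, listing the vertices in order of colour and giving the
`i`-th vertex the label `k · i + (h - k) · (its colour)`. Any two labels then differ by at least
`k`, and labels in different colour classes, in particular on a common edge, by at least `h`.
The last vertex gets at most `k (n - 1) + (h - k) (k' - 1) = k (n - k') + (k' - 1) h`. -/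

open Finset Function

section StrongColoring

variable {V : Type*} (E : Finset (Finset V))

def IsStrongColoring {m : ℕ} (C : V → Fin m) : Prop :=
  ∀ e ∈ E, ∀ u ∈ e, ∀ v ∈ e, u ≠ v → C u ≠ C v

variable [Fintype V]

theorem isStrongColoring_equivFin : IsStrongColoring E (Fintype.equivFin V) :=
  fun _ _ _ _ _ _ huv => (Fintype.equivFin V).injective.ne huv

theorem strongChrom_le_card : strongChrom E ≤ Fintype.card V :=
  Nat.sInf_le ⟨_, isStrongColoring_equivFin E⟩

theorem exists_isStrongColoring_strongChrom :
    ∃ C : V → Fin (strongChrom E), IsStrongColoring E C :=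
  Nat.sInf_mem (s := {m | ∃ C : V → Fin m, IsStrongColoring E C}) ⟨_, _, isStrongColoring_equivFin E⟩

end StrongColoring

section Span

variable {V : Type*}

theorem le_hDist_of_add_le {f : V → ℕ} {u v : V} {a : ℕ} (huv : f u + a ≤ f v) :
    a ≤ hDist f u v := by
  unfold hDist
  omega

theorem hDist_comm (f : V → ℕ) (u v : V) : hDist f u v = hDist f v u := by
  unfold hDist
  omega

variable [Fintype V]

theorem hSpan_le_of_forall_le {f : V → ℕ} {B : ℕ} (hf : ∀ v, f v ≤ B) : hSpan f ≤ B :=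
  (Nat.sub_le _ _).trans (Finset.sup_le fun v _ => hf v)

theorem lamL_le_hSpan {E : Finset (Finset V)} {h k : ℕ} {f : V → ℕ}
    (hf : IsLColoring E h k f) : lamL E h k ≤ hSpan f :=
  Nat.sInf_le ⟨f, hf, rfl⟩

end Span

section Rank

variable {V α : Type*} [Fintype V] [Preorder α]

noncomputable def rankBy (g : V → α) (v : V) : ℕ := #{u | g u < g v}

theorem rankBy_lt_rankBy {g : V → α} {u v : V} (huv : g u < g v) : rankBy g u < rankBy g v := by
  refine Finset.card_lt_card ⟨fun w hw => ?_, fun hsub => ?_⟩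
  · simp only [mem_filter, mem_univ, true_and] at hw ⊢
    exact hw.trans huv
  · have := hsub (mem_filter.mpr ⟨mem_univ u, huv⟩)
    simp at this

theorem rankBy_lt_card (g : V → α) (v : V) : rankBy g v < Fintype.card V :=
  Finset.card_lt_card (filter_ssubset.mpr ⟨v, mem_univ v, lt_irrefl _⟩)

end Rank

section GreedyLabel

variable {V : Type*} [Fintype V] (c : V → ℕ)

noncomputable def colourKey (v : V) : ℕ ×ₗ ℕ := toLex (c v, Fintype.equivFin V v)

theorem colourKey_injective : Injective (colourKey c) := fun _ _ huv =>
  (Fintype.equivFin V).injective (Fin.ext (congrArg (fun p => (ofLex p).2) huv))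

theorem colourKey_lt_colourKey {u v : V} (huv : c u < c v) : colourKey c u < colourKey c v :=
  Prod.Lex.toLex_lt_toLex.mpr (Or.inl huv)

theorem le_of_colourKey_lt {u v : V} (huv : colourKey c u < colourKey c v) : c u ≤ c v :=
  (Prod.Lex.toLex_lt_toLex'.mp huv).1

noncomputable def greedyLabel (k d : ℕ) (v : V) : ℕ := k * rankBy (colourKey c) v + d * c v

variable {c}

theorem greedyLabel_add_le_of_colourKey_lt (k d : ℕ) {u v : V}
    (huv : colourKey c u < colourKey c v) : greedyLabel c k d u + k ≤ greedyLabel c k d v := by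
  have hr := rankBy_lt_rankBy huv
  have hc := le_of_colourKey_lt c huv
  unfold greedyLabel
  nlinarith

theorem greedyLabel_add_le_of_lt (k d : ℕ) {u v : V} (huv : c u < c v) :
    greedyLabel c k d u + (k + d) ≤ greedyLabel c k d v := by
  have hr := rankBy_lt_rankBy (colourKey_lt_colourKey c huv)
  unfold greedyLabel
  nlinarith

theorem le_hDist_greedyLabel_of_ne (k d : ℕ) {u v : V} (huv : u ≠ v) :
    k ≤ hDist (greedyLabel c k d) u v := by
  rcases lt_or_gt_of_ne ((colourKey_injective c).ne huv) with hlt | hlt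
  · exact le_hDist_of_add_le (greedyLabel_add_le_of_colourKey_lt k d hlt)
  · exact hDist_comm _ v u ▸ le_hDist_of_add_le (greedyLabel_add_le_of_colourKey_lt k d hlt)

theorem le_hDist_greedyLabel_of_colour_ne (k d : ℕ) {u v : V} (huv : c u ≠ c v) :
    k + d ≤ hDist (greedyLabel c k d) u v := by
  rcases lt_or_gt_of_ne huv with hlt | hlt
  · exact le_hDist_of_add_le (greedyLabel_add_le_of_lt k d hlt)
  · exact hDist_comm _ v u ▸ le_hDist_of_add_le (greedyLabel_add_le_of_lt k d hlt)

theorem isLColoring_greedyLabel {E : Finset (Finset V)} {m h k : ℕ} {C : V → Fin m}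
    (hC : IsStrongColoring E C) (hkh : k ≤ h) :
    IsLColoring E h k (greedyLabel (fun v => C v) k (h - k)) := by
  refine ⟨fun u v huv ⟨e, he, hu, hv⟩ => ?_, fun u v huv _ => le_hDist_greedyLabel_of_ne k _ huv⟩
  have hcol : (C u : ℕ) ≠ C v := Fin.val_injective.ne (hC e he u hu v hv huv)
  have := le_hDist_greedyLabel_of_colour_ne (c := fun v => (C v : ℕ)) k (h - k) hcol
  omega

theorem greedyLabel_le {m h k : ℕ} (C : V → Fin m) (hkh : k ≤ h) (hm : m ≤ Fintype.card V)
    (v : V) : greedyLabel (fun v => C v) k (h - k) v ≤ k * (Fintype.card V - m) + (m - 1) * h := by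
  have hr := rankBy_lt_card (colourKey fun v => (C v : ℕ)) v
  have hc := (C v).isLt
  dsimp only [greedyLabel]
  generalize rankBy (colourKey fun v => (C v : ℕ)) v = r at hr ⊢
  generalize (C v : ℕ) = c at hc ⊢
  generalize Fintype.card V = n at hr hm ⊢
  obtain ⟨d, rfl⟩ := Nat.exists_eq_add_of_le hkh
  obtain ⟨b, rfl⟩ := Nat.exists_eq_add_of_lt hc
  obtain ⟨a, rfl⟩ := Nat.exists_eq_add_of_le hm
  have hr' : r ≤ a + (c + b) := by omega
  simp only [Nat.add_sub_cancel_left, Nat.add_sub_cancel]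
  nlinarith

end GreedyLabel

theorem lamL_le_of_strongChrom_general {V : Type*} [Fintype V] (E : Finset (Finset V))
    (h k k' n : ℕ) (hhk : k < h)
    (hn : Fintype.card V = n)
    (hchrom : strongChrom E = k') :
    lamL E h k ≤ k * (n - k') + (k' - 1) * h := by
  subst hn hchrom
  obtain ⟨C, hC⟩ := exists_isStrongColoring_strongChrom E
  calc lamL E h k ≤ hSpan (greedyLabel (fun v => C v) k (h - k)) :=
        lamL_le_hSpan (isLColoring_greedyLabel hC hhk.le)
    _ ≤ _ := hSpan_le_of_forall_le (greedyLabel_le C hhk.le (strongChrom_le_card E))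

/-- If `H` is a simple hypergraph of order `n` with strong chromatic number
`k'`, then `λ_{h,k}(H) ≤ k(n - k') + (k' - 1)h`. -/
theorem lamL_le_of_strongChrom {V : Type*} [Fintype V] (E : Finset (Finset V))
    (h k k' n : ℕ) (hhk : k < h)
    (hn : Fintype.card V = n)
    (hsimple : HSimple E)
    (hchrom : strongChrom E = k') :
    lamL E h k ≤ k * (n - k') + (k' - 1) * h :=
  lamL_le_of_strongChrom_general E h k k' n hhk hn hchrom
end

section
/- Let H be a simple hypergraph and let s be an integer with 2 < s ≤ rank(H). Then for any nonnegative integers h > k, λ_{h,k}(H) = λ_{h,k}([H]_s), where [H]_s is the s-section of H. -/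
open scoped Classical

/-- The `s`-section of a hypergraph: its edges are the `s`-element subsets of edges of `H`
together with the edges of `H` of cardinality less than `s`. -/
noncomputable def sSection {V : Type*} [Fintype V] (E : Finset (Finset V)) (s : ℕ) :
    Finset (Finset V) :=
  Finset.univ.powerset.filter
    (fun e' => (∃ e ∈ E, e' ⊆ e ∧ e'.card = s) ∨ (e' ∈ E ∧ e'.card < s))

/-!
Both conditions of an `L(h,k)`-colouring only ask which pairs of vertices lie in a common edge:
`u` and `v` are at distance two through `w` exactly when `{u, w}` and `{w, v}` are each covered
by an edge. For `s ≥ 2` every such pair covered by an edge of `H` is covered by an edge of `[H]_s`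
and conversely, so `H` and `[H]_s` have the same `L(h,k)`-colourings.
-/

section LColoring

variable {V : Type*} {E F : Finset (Finset V)} {h k : ℕ} {f : V → ℕ}

theorem IsLColoring.of_pairs_covered
    (hEF : ∀ e ∈ E, ∀ u ∈ e, ∀ v ∈ e, ∃ e' ∈ F, u ∈ e' ∧ v ∈ e')
    (hf : IsLColoring F h k f) : IsLColoring E h k f := by
  constructor
  · rintro u v huv ⟨e, he, hu, hv⟩
    exact hf.1 u v huv (hEF e he u hu v hv)
  rintro u v huv ⟨e₁, he₁, e₂, he₂, hu, hv, w, hw⟩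
  simp only [Finset.mem_sdiff, Finset.mem_inter] at hw
  obtain ⟨⟨hw₁, hw₂⟩, huvw⟩ := hw
  obtain ⟨e₁', he₁', hu', hw₁'⟩ := hEF e₁ he₁ u hu w hw₁
  obtain ⟨e₂', he₂', hv', hw₂'⟩ := hEF e₂ he₂ v hv w hw₂
  exact hf.2 u v huv ⟨e₁', he₁', e₂', he₂', hu', hv', w,
    Finset.mem_sdiff.2 ⟨Finset.mem_inter.2 ⟨hw₁', hw₂'⟩, huvw⟩⟩

theorem IsLColoring.of_subset_edges (hFE : ∀ e' ∈ F, ∃ e ∈ E, e' ⊆ e)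
    (hf : IsLColoring E h k f) : IsLColoring F h k f :=
  hf.of_pairs_covered fun e' he' _ hu _ hv =>
    let ⟨e, he, hsub⟩ := hFE e' he'
    ⟨e, he, hsub hu, hsub hv⟩

theorem lamL_congr [Fintype V] (hEF : ∀ f, IsLColoring E h k f ↔ IsLColoring F h k f) :
    lamL E h k = lamL F h k := by
  simp only [lamL, hEF]

end LColoring

section SSection

variable {V : Type*} [Fintype V] {E : Finset (Finset V)} {s : ℕ}

theorem exists_superset_of_mem_sSection {e' : Finset V} (he' : e' ∈ sSection E s) :
    ∃ e ∈ E, e' ⊆ e := by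
  simp only [sSection, Finset.mem_filter] at he'
  rcases he'.2 with ⟨e, he, hsub, -⟩ | ⟨he, -⟩
  · exact ⟨e, he, hsub⟩
  · exact ⟨e', he, subset_rfl⟩

theorem exists_mem_sSection_superset {e t : Finset V} (he : e ∈ E) (hte : t ⊆ e)
    (ht : t.card ≤ s) : ∃ e' ∈ sSection E s, t ⊆ e' := by
  by_cases hes : e.card < s
  · exact ⟨e, by simp [sSection, he, hes], hte⟩
  · obtain ⟨u, htu, hue, hu⟩ := Finset.exists_subsuperset_card_eq hte ht (not_lt.1 hes)
    refine ⟨u, ?_, htu⟩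
    simp only [sSection, Finset.mem_filter, Finset.mem_powerset]
    exact ⟨u.subset_univ, Or.inl ⟨e, he, hue, hu⟩⟩

theorem isLColoring_sSection_iff (hs : 2 ≤ s) {h k : ℕ} {f : V → ℕ} :
    IsLColoring (sSection E s) h k f ↔ IsLColoring E h k f := by
  refine ⟨IsLColoring.of_pairs_covered fun e he u hu v hv => ?_,
    IsLColoring.of_subset_edges fun _ => exists_superset_of_mem_sSection⟩
  have hpair : ({u, v} : Finset V) ⊆ e :=
    Finset.insert_subset hu (Finset.singleton_subset_iff.2 hv)
  obtain ⟨e', he', hsub⟩ :=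
    exists_mem_sSection_superset he hpair (Finset.card_le_two.trans hs)
  exact ⟨e', he', hsub (by simp), hsub (by simp)⟩

end SSection

theorem lamL_eq_lamL_sSection_general {V : Type*} [Fintype V] (E : Finset (Finset V))
    (s h k : ℕ)
    (hs : 2 < s) :
    lamL E h k = lamL (sSection E s) h k :=
  lamL_congr fun _ => (isLColoring_sSection_iff hs.le).symm

/-- For a simple hypergraph `H` and `2 < s ≤ rank H`,
`λ_{h,k}(H) = λ_{h,k}([H]_s)`. -/
theorem lamL_eq_lamL_sSection {V : Type*} [Fintype V] (E : Finset (Finset V))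
    (s h k : ℕ) (hhk : k < h)
    (hsimple : HSimple E)
    (hs : 2 < s) (hsr : s ≤ E.sup Finset.card) :
    lamL E h k = lamL (sSection E s) h k :=
  lamL_eq_lamL_sSection_general E s h k hs
end

section
/- Let P^m_r be an r-uniform hyperpath with m edges, where r ≥ 3. Then λ(P^m_r) = 2r - 2 if m = 1, λ(P^m_r) = 2r - 1 if m = 2, and λ(P^m_r) = 2r if m ≥ 3, where λ denotes the L(2,1)-chromatic number. -/
open scoped Classical

/-- `IsHyperpath E r m e w` : `E` is the edge family of an `r`-uniform hyperpath with `m`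
edges `e 0, …, e (m-1)` on the whole vertex type, where consecutive edges meet exactly in the
single vertex `w i` and non-consecutive edges are disjoint. -/
def IsHyperpath {V : Type*} (E : Finset (Finset V)) (r m : ℕ)
    (e : ℕ → Finset V) (w : ℕ → V) : Prop :=
  E = (Finset.range m).image e ∧
    (∀ i < m, (e i).card = r) ∧
    (∀ i j, i < j → j < m → j ≠ i + 1 → e i ∩ e j = ∅) ∧
    (∀ i, i + 1 < m → e i ∩ e (i + 1) = {w i}) ∧
    (∀ x : V, ∃ i < m, x ∈ e i)

/-!
Within an edge the colours are two apart, and on two consecutive edges they are pairwise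
distinct. One edge thus needs `r` colours spaced by two, hence span `2r - 2`. Two consecutive
edges carry `2r - 1` distinct colours, none adjacent to the colour of their common vertex,
hence span `2r - 1`. With three edges and span `2r - 1` this forces both `w 0` and `w 1` onto the
two extreme colours; then the other colours of `e 0` and of `e 2` fill the two parity classes of
the remaining interval, and an inner vertex of `e 1` has no colour left.

Conversely, colour each edge bijectively by an `r`-element palette of colours spaced by two, where
consecutive palettes meet exactly in the colour of their common vertex; for three or more edges
four palettes inside `{0, …, 2r}` are repeated periodically.
-/

open Finset

def TwoSeparated (S : Finset ℕ) : Prop :=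
  ∀ a ∈ S, ∀ b ∈ S, a ≠ b → a + 2 ≤ b ∨ b + 2 ≤ a

namespace TwoSeparated

variable {S : Finset ℕ}

theorem mono {T : Finset ℕ} (hS : TwoSeparated S) (hT : T ⊆ S) : TwoSeparated T :=
  fun a ha b hb => hS a (hT ha) b (hT hb)

theorem card_le (hS : TwoSeparated S) {lo hi : ℕ} (hsub : S ⊆ Ico lo hi) :
    2 * S.card ≤ hi + 1 - lo := by
  have hmaps : Set.MapsTo (fun x => (x - lo) / 2) S (range ((hi + 1 - lo) / 2)) := by
    intro a ha
    have := mem_Ico.1 (hsub ha)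
    simp only [coe_range, Set.mem_Iio]
    omega
  have hinj : Set.InjOn (fun x => (x - lo) / 2) S := by
    intro a ha b hb hab
    by_contra hne
    have := hS a ha b hb hne
    have := mem_Ico.1 (hsub ha)
    have := mem_Ico.1 (hsub hb)
    simp only at hab
    omega
  have := card_le_card_of_injOn _ hmaps hinj
  rw [card_range] at this
  omega

theorem add_two_mul_mem (hS : TwoSeparated S) {a k j : ℕ} (hsub : S ⊆ Icc a (a + 2 * k))
    (hcard : S.card = k + 1) (hj : j ≤ k) : a + 2 * j ∈ S := by
  -- otherwise the elements below `a + 2 * j` fit into `j` slots and those above into `k - j`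
  by_contra hy
  have hbelow : 2 * (S.filter (· < a + 2 * j)).card ≤ 2 * j + 1 := by
    refine le_trans ((hS.mono (filter_subset _ _)).card_le
      (lo := a) (hi := a + 2 * j) fun x hx => ?_) (by omega)
    obtain ⟨hxS, hxy⟩ := mem_filter.1 hx
    have := mem_Icc.1 (hsub hxS)
    exact mem_Ico.2 ⟨this.1, hxy⟩
  have habove : 2 * (S.filter (¬ · < a + 2 * j)).card ≤ 2 * (k - j) + 1 := by
    refine le_trans ((hS.mono (filter_subset _ _)).card_le
      (lo := a + 2 * j + 1) (hi := a + 2 * k + 1) fun x hx => ?_) (by omega)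
    obtain ⟨hxS, hxy⟩ := mem_filter.1 hx
    have := mem_Icc.1 (hsub hxS)
    have : x ≠ a + 2 * j := fun h => hy (h ▸ hxS)
    exact mem_Ico.2 ⟨by omega, by omega⟩
  have := card_filter_add_card_filter_not (s := S) (· < a + 2 * j)
  omega

end TwoSeparated

def arithProg (a n : ℕ) : Finset ℕ := (range n).image (a + 2 * ·)

theorem mem_arithProg {a n x : ℕ} :
    x ∈ arithProg a n ↔ a ≤ x ∧ x < a + 2 * n ∧ x % 2 = a % 2 := by
  simp only [arithProg, mem_image, mem_range]
  constructor
  · rintro ⟨k, hk, rfl⟩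
    omega
  · intro h
    exact ⟨(x - a) / 2, by omega, by omega⟩

theorem card_arithProg (a n : ℕ) : (arithProg a n).card = n := by
  rw [arithProg, card_image_of_injective _ fun x y h => by simpa using h, card_range]

/-- Palettes of period four for the edges of a long hyperpath; consecutive palettes share
exactly the colour `pathCutColour r i` of the cut vertex `w i`, which runs through
`0, 2r, 1, 2r - 1`. -/
def pathPalette (r i : ℕ) : Finset ℕ :=
  if i % 4 = 0 then insert (2 * r - 1) (arithProg 0 (r - 1))
  else if i % 4 = 1 then insert 0 (insert (2 * r) (arithProg 3 (r - 2)))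
  else if i % 4 = 2 then insert 1 (insert (2 * r) (arithProg 4 (r - 2)))
  else arithProg 1 r

def pathCutColour (r i : ℕ) : ℕ :=
  if i % 4 = 0 then 0 else if i % 4 = 1 then 2 * r else if i % 4 = 2 then 1 else 2 * r - 1

theorem mem_pathPalette {r i x : ℕ} : x ∈ pathPalette r i ↔
    (i % 4 = 0 ∧ (x = 2 * r - 1 ∨ x + 2 < 2 * r ∧ x % 2 = 0)) ∨
    (i % 4 = 1 ∧ (x = 0 ∨ x = 2 * r ∨ 3 ≤ x ∧ x + 1 < 2 * r ∧ x % 2 = 1)) ∨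
    (i % 4 = 2 ∧ (x = 1 ∨ x = 2 * r ∨ 4 ≤ x ∧ x < 2 * r ∧ x % 2 = 0)) ∨
    (i % 4 = 3 ∧ x < 2 * r ∧ x % 2 = 1) := by
  unfold pathPalette
  split_ifs <;> simp only [mem_insert, mem_arithProg] <;> omega

theorem card_pathPalette {r : ℕ} (hr : 3 ≤ r) (i : ℕ) : (pathPalette r i).card = r := by
  unfold pathPalette
  split_ifs
  · rw [card_insert_of_notMem (by rw [mem_arithProg]; omega), card_arithProg]
    omega
  · rw [card_insert_of_notMem (by simp only [mem_insert, mem_arithProg]; omega),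
      card_insert_of_notMem (by rw [mem_arithProg]; omega), card_arithProg]
    omega
  · rw [card_insert_of_notMem (by simp only [mem_insert, mem_arithProg]; omega),
      card_insert_of_notMem (by rw [mem_arithProg]; omega), card_arithProg]
    omega
  · rw [card_arithProg]

theorem twoSeparated_pathPalette {r : ℕ} (hr : 3 ≤ r) (i : ℕ) :
    TwoSeparated (pathPalette r i) := by
  intro a ha b hb hab
  rw [mem_pathPalette] at ha hb
  omega

theorem pathPalette_inter_succ {r : ℕ} (hr : 3 ≤ r) (i : ℕ) :
    pathPalette r i ∩ pathPalette r (i + 1) = {pathCutColour r i} := by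
  ext x
  rw [mem_inter, mem_pathPalette, mem_pathPalette, mem_singleton, pathCutColour]
  split_ifs <;> omega

theorem pathCutColour_ne_succ {r : ℕ} (hr : 3 ≤ r) (i : ℕ) :
    pathCutColour r i ≠ pathCutColour r (i + 1) := by
  unfold pathCutColour
  split_ifs <;> omega

theorem exists_injOn_mapsTo_eqOn {α β : Type*} {A : Finset α} {Q : Finset β}
    (hcard : A.card = Q.card) {s : Set α} (hs : s ⊆ A) {φ : α → β}
    (hmaps : Set.MapsTo φ s Q) (hinj : Set.InjOn φ s) :
    ∃ g : α → β, Set.InjOn g A ∧ Set.MapsTo g A Q ∧ Set.EqOn g φ s := by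
  obtain ⟨G, hG⟩ := Set.MapsTo.exists_equiv_extend_of_card_eq (α := A) (t := Q)
    (s := {x | (x : α) ∈ s}) (f := φ ∘ Subtype.val) (by simpa using hcard)
    (fun x hx => hmaps hx) (fun x hx y hy h => Subtype.ext (hinj hx hy h))
  refine ⟨fun x => if h : x ∈ A then G ⟨x, h⟩ else φ x, fun x hx y hy h => ?_,
    fun x hx => ?_, fun x hx => ?_⟩
  · simp only [dif_pos (show x ∈ A from hx), dif_pos (show y ∈ A from hy)] at h
    exact congrArg Subtype.val (G.injective (Subtype.ext h))
  · simp only [dif_pos (show x ∈ A from hx)]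
    exact (G _).2
  · simp only [dif_pos (show x ∈ A from hs hx)]
    exact hG ⟨x, hs hx⟩ hx

theorem exists_eqOn_of_agree {V β : Type*} {m : ℕ} {e : ℕ → Finset V} (g : ℕ → V → β)
    (hg : ∀ i < m, ∀ j < m, ∀ v ∈ e i, v ∈ e j → g i v = g j v) :
    ∃ f : V → β, ∀ i < m, Set.EqOn f (g i) (e i) := by
  refine ⟨fun v => if h : ∃ i < m, v ∈ e i then g h.choose v else g 0 v,
    fun i hi v hv => ?_⟩
  have h : ∃ i < m, v ∈ e i := ⟨i, hi, hv⟩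
  simp only [dif_pos h]
  exact hg _ h.choose_spec.1 i hi v h.choose_spec.2 hv

section Colouring

variable {V : Type*} {f : V → ℕ} {u v : V}

theorem two_le_hDist_iff : 2 ≤ hDist f u v ↔ f u + 2 ≤ f v ∨ f v + 2 ≤ f u := by
  unfold hDist; omega

theorem one_le_hDist_iff : 1 ≤ hDist f u v ↔ f u ≠ f v := by
  unfold hDist; omega

theorem hDist_tsub_left {N : ℕ} (hu : f u ≤ N) (hv : f v ≤ N) :
    hDist (fun x => N - f x) u v = hDist f u v := by
  simp only [hDist]; omega

theorem IsLColoring.tsub_left {E : Finset (Finset V)} {h k N : ℕ} (hf : IsLColoring E h k f)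
    (hN : ∀ v, f v ≤ N) : IsLColoring E h k (fun v => N - f v) := by
  refine ⟨fun u v huv hE => ?_, fun u v huv hE => ?_⟩ <;> rw [hDist_tsub_left (hN u) (hN v)]
  exacts [hf.1 u v huv hE, hf.2 u v huv hE]

theorem lamL_eq_of_isLColoring [Fintype V] {E : Finset (Finset V)} {h k M : ℕ}
    (hex : ∃ f, IsLColoring E h k f ∧ ∀ v, f v ≤ M)
    (hlow : ∀ f lo hi, IsLColoring E h k f → (∀ v, f v ∈ Icc lo hi) → M ≤ hi - lo) :
    lamL E h k = M := by
  obtain ⟨f, hf, hfM⟩ := hex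
  apply le_antisymm
  · calc lamL E h k ≤ hSpan f := Nat.sInf_le ⟨f, hf, rfl⟩
      _ ≤ univ.sup f := Nat.sub_le _ _
      _ ≤ M := Finset.sup_le fun v _ => hfM v
  · refine le_csInf ⟨_, f, hf, rfl⟩ ?_
    rintro _ ⟨g, hg, rfl⟩
    exact hlow g _ _ hg fun v => mem_Icc.2 ⟨Nat.sInf_le ⟨v, rfl⟩, le_sup (mem_univ v)⟩

end Colouring

namespace IsHyperpath

variable {V : Type*} {E : Finset (Finset V)} {r m : ℕ} {e : ℕ → Finset V} {w : ℕ → V}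
  {f : V → ℕ} {i j : ℕ} {v : V} {lo hi : ℕ}

theorem edge_mem (hP : IsHyperpath E r m e w) (hi : i < m) : e i ∈ E :=
  hP.1 ▸ mem_image_of_mem e (mem_range.2 hi)

theorem card_edge (hP : IsHyperpath E r m e w) (hi : i < m) : (e i).card = r :=
  hP.2.1 i hi

theorem mem_inter_iff (hP : IsHyperpath E r m e w) (hi : i + 1 < m) :
    v ∈ e i ∧ v ∈ e (i + 1) ↔ v = w i := by
  rw [← mem_inter, hP.2.2.2.1 i hi, mem_singleton]

theorem w_mem_left (hP : IsHyperpath E r m e w) (hi : i + 1 < m) : w i ∈ e i :=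
  ((hP.mem_inter_iff hi).2 rfl).1

theorem w_mem_right (hP : IsHyperpath E r m e w) (hi : i + 1 < m) : w i ∈ e (i + 1) :=
  ((hP.mem_inter_iff hi).2 rfl).2

theorem exists_mem (hP : IsHyperpath E r m e w) (v : V) : ∃ i < m, v ∈ e i :=
  hP.2.2.2.2 v

theorem eq_succ_of_mem_of_mem (hP : IsHyperpath E r m e w) (hij : i < j) (hj : j < m)
    (hvi : v ∈ e i) (hvj : v ∈ e j) : j = i + 1 := by
  by_contra hne
  simpa [hP.2.2.1 i j hij hj hne] using mem_inter.2 ⟨hvi, hvj⟩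

theorem eq_or_succ_eq_of_w_mem (hP : IsHyperpath E r m e w) (hj : j + 1 < m) (hi : i < m)
    (hw : w j ∈ e i) : j = i ∨ j + 1 = i := by
  rcases lt_trichotomy i j with hij | rfl | hji
  · have := hP.eq_succ_of_mem_of_mem (by omega : i < j + 1) hj hw (hP.w_mem_right hj)
    omega
  · exact Or.inl rfl
  · have := hP.eq_succ_of_mem_of_mem hji hi (hP.w_mem_left hj) hw
    omega

theorem injOn_w (hP : IsHyperpath E r m e w) : Set.InjOn w {j | j + 1 < m} := by
  intro j hj k hk hjk
  have h1 := hP.eq_or_succ_eq_of_w_mem hj (Nat.lt_of_succ_lt hk) (hjk ▸ hP.w_mem_left hk)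
  have h2 := hP.eq_or_succ_eq_of_w_mem hj hk (hjk ▸ hP.w_mem_right hk)
  omega

theorem w_ne_w_succ (hP : IsHyperpath E r m e w) (hi : i + 2 < m) : w i ≠ w (i + 1) :=
  fun h => by
    have := hP.injOn_w (show i + 1 < m by omega) (show i + 1 + 1 < m by omega) h
    omega

theorem exists_eq_w_of_mem_of_mem (hP : IsHyperpath E r m e w) (hi : i < m) (hj : j < m)
    (hij : i ≠ j) (hvi : v ∈ e i) (hvj : v ∈ e j) : ∃ k, k + 1 < m ∧ v = w k := by
  rcases lt_or_gt_of_ne hij with hlt | hlt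
  · obtain rfl := hP.eq_succ_of_mem_of_mem hlt hj hvi hvj
    exact ⟨i, hj, (hP.mem_inter_iff hj).1 ⟨hvi, hvj⟩⟩
  · obtain rfl := hP.eq_succ_of_mem_of_mem hlt hi hvj hvi
    exact ⟨j, hi, (hP.mem_inter_iff hi).1 ⟨hvj, hvi⟩⟩

theorem card_union (hP : IsHyperpath E r m e w) (hi : i + 1 < m) :
    (e i ∪ e (i + 1)).card = 2 * r - 1 := by
  have h := card_union_add_card_inter (e i) (e (i + 1))
  rw [hP.2.2.2.1 i hi, hP.card_edge (by omega), hP.card_edge hi, card_singleton] at h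
  omega

theorem isLColoring_iff (hP : IsHyperpath E r m e w) :
    IsLColoring E 2 1 f ↔
      (∀ i < m, ∀ u ∈ e i, ∀ v ∈ e i, u ≠ v → 2 ≤ hDist f u v) ∧
        ∀ i, i + 1 < m → Set.InjOn f ↑(e i ∪ e (i + 1)) := by
  constructor
  · rintro ⟨hstrong, hweak⟩
    refine ⟨fun i hi u hu v hv huv => hstrong u v huv ⟨e i, hP.edge_mem hi, hu, hv⟩, ?_⟩
    intro i hi u hu v hv hfuv
    by_contra huv
    have hedge : ∀ {x}, x ∈ e i ∪ e (i + 1) → ∃ a < m, x ∈ e a ∧ w i ∈ e a := by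
      intro x hx
      rcases mem_union.1 hx with hx | hx
      exacts [⟨i, by omega, hx, hP.w_mem_left hi⟩, ⟨i + 1, hi, hx, hP.w_mem_right hi⟩]
    obtain ⟨a, ha, hua, hwa⟩ := hedge hu
    obtain ⟨b, hb, hvb, hwb⟩ := hedge hv
    have : 1 ≤ hDist f u v := by
      by_cases hwu : w i = u
      · exact le_trans (by norm_num) (hstrong u v huv ⟨e b, hP.edge_mem hb, hwu ▸ hwb, hvb⟩)
      by_cases hwv : w i = v
      · exact le_trans (by norm_num) (hstrong u v huv ⟨e a, hP.edge_mem ha, hua, hwv ▸ hwa⟩)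
      refine hweak u v huv ⟨e a, hP.edge_mem ha, e b, hP.edge_mem hb, hua, hvb, w i, ?_⟩
      simp [hwa, hwb, hwu, hwv]
    exact one_le_hDist_iff.1 this hfuv
  · rintro ⟨hstrong, hinj⟩
    refine ⟨?_, ?_⟩
    · rintro u v huv ⟨_, he, hu, hv⟩
      obtain ⟨i, hi, rfl⟩ := mem_image.1 (hP.1 ▸ he)
      exact hstrong i (mem_range.1 hi) u hu v hv huv
    · rintro u v huv ⟨_, he₁, _, he₂, hu, hv, x, hx⟩
      obtain ⟨i, hi, rfl⟩ := mem_image.1 (hP.1 ▸ he₁)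
      obtain ⟨j, hj, rfl⟩ := mem_image.1 (hP.1 ▸ he₂)
      rw [mem_range] at hi hj
      obtain ⟨hxi, hxj⟩ := mem_inter.1 (mem_sdiff.1 hx).1
      rw [one_le_hDist_iff]
      rcases lt_trichotomy i j with hij | rfl | hji
      · obtain rfl := hP.eq_succ_of_mem_of_mem hij hj hxi hxj
        exact fun h => huv (hinj i hj (mem_union_left _ hu) (mem_union_right _ hv) h)
      · exact one_le_hDist_iff.1 (le_trans (by norm_num) (hstrong i hi u hu v hv huv))
      · obtain rfl := hP.eq_succ_of_mem_of_mem hji hi hxj hxi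
        exact fun h => huv (hinj j hi (mem_union_right _ hu) (mem_union_left _ hv) h)

theorem injOn_edge (hP : IsHyperpath E r m e w) (hf : IsLColoring E 2 1 f) (hi : i < m) :
    Set.InjOn f (e i) := fun u hu v hv hfuv => by
  by_contra huv
  have := two_le_hDist_iff.1 ((hP.isLColoring_iff.1 hf).1 i hi u hu v hv huv)
  omega

theorem twoSeparated_image (hP : IsHyperpath E r m e w) (hf : IsLColoring E 2 1 f) (hi : i < m)
    {s : Finset V} (hs : s ⊆ e i) : TwoSeparated (s.image f) := by
  rintro _ ha _ hb hab
  obtain ⟨u, hu, rfl⟩ := mem_image.1 ha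
  obtain ⟨v, hv, rfl⟩ := mem_image.1 hb
  exact two_le_hDist_iff.1
    ((hP.isLColoring_iff.1 hf).1 i hi u (hs hu) v (hs hv) fun h => hab (h ▸ rfl))

theorem two_mul_sub_two_le (hP : IsHyperpath E r m e w) (hm : 1 ≤ m)
    (hf : IsLColoring E 2 1 f) (hb : ∀ v, f v ∈ Icc lo hi) : 2 * r - 2 ≤ hi - lo := by
  have hcard : ((e 0).image f).card = r := by
    rw [card_image_of_injOn (hP.injOn_edge hf hm), hP.card_edge hm]
  have := (hP.twoSeparated_image hf hm subset_rfl).card_le (lo := lo) (hi := hi + 1)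
    fun x hx => by
      obtain ⟨v, -, rfl⟩ := mem_image.1 hx
      have := mem_Icc.1 (hb v)
      exact mem_Ico.2 ⟨this.1, by omega⟩
  omega

/-- The `2r - 1` colours on `e i ∪ e (i + 1)` are distinct and avoid `f (w i) ± 1`. -/
theorem card_add_card_le_of_cut (hP : IsHyperpath E r m e w) (hf : IsLColoring E 2 1 f)
    (hb : ∀ v, f v ∈ Icc lo hi) (him : i + 1 < m) {N : Finset ℕ} (hN : N ⊆ Icc lo hi)
    (hadj : ∀ x ∈ N, x + 1 = f (w i) ∨ x = f (w i) + 1) :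
    2 * r - 1 + N.card ≤ hi + 1 - lo := by
  obtain ⟨hstrong, hinj⟩ := hP.isLColoring_iff.1 hf
  set T := (e i ∪ e (i + 1)).image f
  have hT : T.card = 2 * r - 1 := by rw [card_image_of_injOn (hinj i him), hP.card_union him]
  have hdisj : Disjoint T N := by
    refine disjoint_left.2 fun x hx hxN => ?_
    obtain ⟨u, hu, rfl⟩ := mem_image.1 hx
    have hx := hadj _ hxN
    by_cases huw : u = w i
    · subst huw
      omega
    have : 2 ≤ hDist f u (w i) := by
      rcases mem_union.1 hu with hu | hu
      exacts [hstrong i (by omega) u hu _ (hP.w_mem_left him) huw,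
        hstrong (i + 1) him u hu _ (hP.w_mem_right him) huw]
    rw [two_le_hDist_iff] at this
    omega
  have hTN : T ∪ N ⊆ Icc lo hi := union_subset (fun x hx => by
    obtain ⟨u, -, rfl⟩ := mem_image.1 hx
    exact hb u) hN
  calc 2 * r - 1 + N.card = (T ∪ N).card := by rw [card_union_of_disjoint hdisj, hT]
    _ ≤ (Icc lo hi).card := card_le_card hTN
    _ = hi + 1 - lo := Nat.card_Icc _ _

theorem two_mul_sub_one_le (hP : IsHyperpath E r m e w) (hr : 2 ≤ r) (hm : 2 ≤ m)
    (hf : IsLColoring E 2 1 f) (hb : ∀ v, f v ∈ Icc lo hi) : 2 * r - 1 ≤ hi - lo := by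
  have hm' : 0 + 1 < m := by omega
  have hspan := hP.card_add_card_le_of_cut hf hb hm' (empty_subset _) (by simp)
  rw [card_empty] at hspan
  have hc := mem_Icc.1 (hb (w 0))
  obtain ⟨x, hx, hadj⟩ : ∃ x ∈ Icc lo hi, x + 1 = f (w 0) ∨ x = f (w 0) + 1 := by
    rcases lt_or_eq_of_le hc.2 with hlt | heq
    exacts [⟨f (w 0) + 1, mem_Icc.2 ⟨by omega, hlt⟩, Or.inr rfl⟩,
      ⟨f (w 0) - 1, mem_Icc.2 ⟨by omega, by omega⟩, Or.inl (by omega)⟩]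
  have := hP.card_add_card_le_of_cut hf hb hm' (singleton_subset_iff.2 hx)
    (by simpa using hadj)
  rw [card_singleton] at this
  omega

theorem two_mul_le_of_mem_Ioo (hP : IsHyperpath E r m e w) (hf : IsLColoring E 2 1 f)
    (hb : ∀ v, f v ∈ Icc lo hi) (him : i + 1 < m) (hc : f (w i) ∈ Ioo lo hi) :
    2 * r ≤ hi - lo := by
  have hc := mem_Ioo.1 hc
  have := hP.card_add_card_le_of_cut hf hb him (N := {f (w i) - 1, f (w i) + 1})
    (by intro x hx; simp only [mem_insert, mem_singleton] at hx; rw [mem_Icc]; omega)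
    (by intro x hx; simp only [mem_insert, mem_singleton] at hx; omega)
  rw [card_pair (by omega)] at this
  omega

theorem exists_mem_ne_ne (hP : IsHyperpath E r m e w) (hr : 3 ≤ r) (hi : i + 2 < m) :
    ∃ x ∈ e (i + 1), x ≠ w i ∧ x ≠ w (i + 1) := by
  have hw := hP.w_ne_w_succ hi
  obtain ⟨x, hx⟩ : (((e (i + 1)).erase (w i)).erase (w (i + 1))).Nonempty := by
    rw [← card_pos, card_erase_of_mem (mem_erase.2 ⟨hw.symm, hP.w_mem_left hi⟩),
      card_erase_of_mem (hP.w_mem_right (by omega)), hP.card_edge (by omega)]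
    omega
  simp only [mem_erase] at hx
  exact ⟨x, hx.2.2, hx.2.1, hx.1⟩

theorem exists_mem_edge_apply_eq (hP : IsHyperpath E r m e w) (hr : 2 ≤ r)
    (hf : IsLColoring E 2 1 f) (hi : i < m) {y : V} (hy : y ∈ e i) {a j : ℕ}
    (hsub : ∀ u ∈ e i, u ≠ y → f u ∈ Icc a (a + 2 * (r - 2))) (hj : j ≤ r - 2) :
    ∃ u ∈ e i, u ≠ y ∧ f u = a + 2 * j := by
  have hcard : (((e i).erase y).image f).card = r - 2 + 1 := by
    rw [card_image_of_injOn ((hP.injOn_edge hf hi).mono (erase_subset y (e i))),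
      card_erase_of_mem hy, hP.card_edge hi]
    omega
  have hmem := (hP.twoSeparated_image hf hi (erase_subset y (e i))).add_two_mul_mem
    (fun x hx => by
      obtain ⟨u, hu, rfl⟩ := mem_image.1 hx
      exact hsub u (mem_of_mem_erase hu) (ne_of_mem_erase hu)) hcard hj
  obtain ⟨u, hu, hfu⟩ := mem_image.1 hmem
  exact ⟨u, mem_of_mem_erase hu, ne_of_mem_erase hu, hfu⟩

/-- With `w 0` and `w 1` at the two ends of the colour range, the other colours of
`e 0` are forced to be `lo + 2, lo + 4, …` and those of `e 2` to be `lo + 1, lo + 3, …`;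
together they leave no colour for an inner vertex of `e 1`. -/
theorem false_of_extreme_cuts (hP : IsHyperpath E r m e w) (hr : 3 ≤ r) (hm : 3 ≤ m)
    (hf : IsLColoring E 2 1 f) (hb : ∀ v, f v ∈ Icc lo (lo + (2 * r - 1)))
    (h0 : f (w 0) = lo) (h1 : f (w 1) = lo + (2 * r - 1)) : False := by
  obtain ⟨hstrong, hinj⟩ := hP.isLColoring_iff.1 hf
  have hw0 : w 0 ∉ e 2 := fun h => by
    have := hP.eq_succ_of_mem_of_mem (by norm_num) hm (hP.w_mem_left (by omega)) h
    omega
  have hw1 : w 1 ∉ e 0 := fun h => by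
    have := hP.eq_succ_of_mem_of_mem (by norm_num) hm h (hP.w_mem_right (by omega))
    omega
  have heven : ∀ j ≤ r - 2, ∃ u ∈ e 0, u ≠ w 0 ∧ f u = lo + 2 + 2 * j :=
    fun j => hP.exists_mem_edge_apply_eq (by omega) hf (by omega) (hP.w_mem_left (by omega))
      fun u hu huw => by
        have h2 := two_le_hDist_iff.1 (hstrong 0 (by omega) u hu _ (hP.w_mem_left (by omega)) huw)
        have hne : f u ≠ f (w 1) := fun h => (ne_of_mem_of_not_mem hu hw1)
          (hinj 0 (by omega) (mem_union_left _ hu) (mem_union_right _ (hP.w_mem_left (by omega))) h)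
        have := mem_Icc.1 (hb u)
        rw [mem_Icc]
        omega
  have hodd : ∀ j ≤ r - 2, ∃ u ∈ e 2, u ≠ w 1 ∧ f u = lo + 1 + 2 * j :=
    fun j => hP.exists_mem_edge_apply_eq (by omega) hf (by omega) (hP.w_mem_right (by omega))
      fun u hu huw => by
        have h2 := two_le_hDist_iff.1 (hstrong 2 (by omega) u hu _ (hP.w_mem_right (by omega)) huw)
        have hne : f u ≠ f (w 0) := fun h => (ne_of_mem_of_not_mem hu hw0)
          (hinj 1 (by omega) (mem_union_right _ hu)
            (mem_union_left _ (hP.w_mem_right (by omega))) h)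
        have := mem_Icc.1 (hb u)
        rw [mem_Icc]
        omega
  obtain ⟨x, hx1, hxw0, hxw1⟩ := hP.exists_mem_ne_ne (i := 0) hr (by omega)
  have hfx0 := two_le_hDist_iff.1 (hstrong 1 (by omega) x hx1 _ (hP.w_mem_right (by omega)) hxw0)
  have hfx1 := two_le_hDist_iff.1 (hstrong 1 (by omega) x hx1 _ (hP.w_mem_left (by omega)) hxw1)
  have := mem_Icc.1 (hb x)
  obtain ⟨j, hj⟩ | ⟨j, hj⟩ : (∃ j ≤ r - 2, f x = lo + 2 + 2 * j) ∨
      ∃ j ≤ r - 2, f x = lo + 1 + 2 * j := by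
    rcases Nat.even_or_odd (f x - lo) with ⟨k, hk⟩ | ⟨k, hk⟩
    exacts [Or.inl ⟨k - 1, by omega, by omega⟩, Or.inr ⟨k, by omega, by omega⟩]
  · obtain ⟨u, hu, huw, hfu⟩ := heven j hj.1
    have := hinj 0 (by omega) (mem_union_left _ hu) (mem_union_right _ hx1) (hfu.trans hj.2.symm)
    exact hxw0 ((hP.mem_inter_iff (by omega)).1 ⟨this ▸ hu, hx1⟩)
  · obtain ⟨u, hu, huw, hfu⟩ := hodd j hj.1
    have := hinj 1 (by omega) (mem_union_left _ hx1) (mem_union_right _ hu) (hj.2.trans hfu.symm)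
    exact hxw1 ((hP.mem_inter_iff (by omega)).1 ⟨hx1, this ▸ hu⟩)

theorem two_mul_le (hP : IsHyperpath E r m e w) (hr : 3 ≤ r) (hm : 3 ≤ m)
    (hf : IsLColoring E 2 1 f) (hb : ∀ v, f v ∈ Icc lo hi) : 2 * r ≤ hi - lo := by
  by_contra hlt
  have hspan := hP.two_mul_sub_one_le (by omega) (by omega) hf hb
  have hext : ∀ i, i + 1 < m → f (w i) = lo ∨ f (w i) = hi := fun i hi' => by
    have := mem_Icc.1 (hb (w i))
    by_contra h
    exact hlt (hP.two_mul_le_of_mem_Ioo hf hb hi' (mem_Ioo.2 ⟨by omega, by omega⟩))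
  have hgap := two_le_hDist_iff.1 ((hP.isLColoring_iff.1 hf).1 1 (by omega) _
    (hP.w_mem_right (by omega)) _ (hP.w_mem_left (by omega)) (hP.w_ne_w_succ (i := 0) hm))
  have hb' : ∀ v, f v ∈ Icc lo (lo + (2 * r - 1)) := fun v => by
    have := mem_Icc.1 (hb v)
    exact mem_Icc.2 ⟨this.1, by omega⟩
  rcases hext 0 (by omega) with h0 | h0 <;> rcases hext 1 (by omega) with h1 | h1
  · omega
  · exact hP.false_of_extreme_cuts hr hm hf hb' h0 (by omega)
  · refine hP.false_of_extreme_cuts hr hm (f := fun v => lo + hi - f v) (lo := lo)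
      (hf.tsub_left fun v => by have := mem_Icc.1 (hb v); omega) (fun v => ?_) ?_ ?_
    · have := mem_Icc.1 (hb v)
      exact mem_Icc.2 ⟨by omega, by omega⟩
    all_goals omega
  · omega

theorem exists_injOn_mapsTo_edge (hP : IsHyperpath E r m e w) {Q : ℕ → Finset ℕ}
    {c : ℕ → ℕ} (hQcard : ∀ i < m, (Q i).card = r)
    (hcQ : ∀ j, j + 1 < m → c j ∈ Q j ∧ c j ∈ Q (j + 1))
    (hc : ∀ j, j + 2 < m → c j ≠ c (j + 1)) (hi : i < m) :
    ∃ g : V → ℕ, Set.InjOn g (e i) ∧ Set.MapsTo g (e i) (Q i) ∧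
      ∀ j, j + 1 < m → w j ∈ e i → g (w j) = c j := by
  set cuts : Set V := w '' {j | j + 1 < m}
  set φ : V → ℕ := fun v => c (Function.invFunOn w {j | j + 1 < m} v)
  have hφ : ∀ j, j + 1 < m → φ (w j) = c j := fun j hj =>
    congrArg c (hP.injOn_w.leftInvOn_invFunOn hj)
  have hmaps : Set.MapsTo φ (↑(e i) ∩ cuts) (Q i) := by
    rintro _ ⟨hv, j, hj, rfl⟩
    rw [hφ j hj]
    rcases hP.eq_or_succ_eq_of_w_mem hj hi hv with rfl | rfl
    exacts [(hcQ j hj).1, (hcQ j hj).2]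
  have hinj : Set.InjOn φ (↑(e i) ∩ cuts) := by
    rintro _ ⟨hu, j, hj, rfl⟩ _ ⟨hv, k, hk, rfl⟩ h
    rw [hφ j hj, hφ k hk] at h
    have hj' := hP.eq_or_succ_eq_of_w_mem hj hi hu
    have hk' := hP.eq_or_succ_eq_of_w_mem hk hi hv
    have hj : j + 1 < m := hj
    have hk : k + 1 < m := hk
    rcases lt_trichotomy j k with hjk | rfl | hjk
    · obtain rfl : k = j + 1 := by omega
      exact absurd h (hc j (by omega))
    · rfl
    · obtain rfl : j = k + 1 := by omega
      exact absurd h.symm (hc k (by omega))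
  obtain ⟨g, hginj, hgmaps, hgφ⟩ := exists_injOn_mapsTo_eqOn
    (by rw [hP.card_edge hi, hQcard i hi]) Set.inter_subset_left hmaps hinj
  exact ⟨g, hginj, hgmaps, fun j hj hw => (hgφ ⟨hw, j, hj, rfl⟩).trans (hφ j hj)⟩

theorem exists_injOn_mapsTo_palette (hP : IsHyperpath E r m e w) {Q : ℕ → Finset ℕ}
    {c : ℕ → ℕ} (hQcard : ∀ i < m, (Q i).card = r)
    (hcQ : ∀ j, j + 1 < m → c j ∈ Q j ∧ c j ∈ Q (j + 1))
    (hc : ∀ j, j + 2 < m → c j ≠ c (j + 1)) :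
    ∃ f : V → ℕ, (∀ i < m, Set.InjOn f (e i) ∧ Set.MapsTo f (e i) (Q i)) ∧
      ∀ j, j + 1 < m → f (w j) = c j := by
  choose! g hg using fun i (hi : i < m) => hP.exists_injOn_mapsTo_edge hQcard hcQ hc hi
  obtain ⟨f, hfg⟩ := exists_eqOn_of_agree (m := m) (e := e) g fun i hi j hj v hvi hvj => by
    by_cases hij : i = j
    · rw [hij]
    obtain ⟨k, hk, rfl⟩ := hP.exists_eq_w_of_mem_of_mem hi hj hij hvi hvj
    rw [(hg i hi).2.2 k hk hvi, (hg j hj).2.2 k hk hvj]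
  refine ⟨f, fun i hi => ⟨(hg i hi).1.congr (hfg i hi).symm,
    (hg i hi).2.1.congr (hfg i hi).symm⟩, fun j hj => ?_⟩
  rw [hfg j (by omega) (hP.w_mem_left hj), (hg j (by omega)).2.2 j hj (hP.w_mem_left hj)]

theorem exists_isLColoring_of_palettes (hP : IsHyperpath E r m e w) (Q : ℕ → Finset ℕ)
    (c : ℕ → ℕ) (hQcard : ∀ i < m, (Q i).card = r) (hQsep : ∀ i < m, TwoSeparated (Q i))
    (hQc : ∀ i, i + 1 < m → Q i ∩ Q (i + 1) = {c i})
    (hc : ∀ i, i + 2 < m → c i ≠ c (i + 1)) :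
    ∃ f, IsLColoring E 2 1 f ∧ ∀ v, ∃ i < m, f v ∈ Q i := by
  have hcQ : ∀ j, j + 1 < m → c j ∈ Q j ∧ c j ∈ Q (j + 1) := fun j hj =>
    mem_inter.1 (hQc j hj ▸ mem_singleton_self _)
  obtain ⟨f, hf, hfw⟩ := hP.exists_injOn_mapsTo_palette hQcard hcQ hc
  refine ⟨f, hP.isLColoring_iff.2 ⟨fun i hi u hu v hv huv => ?_, fun i hi => ?_⟩,
    fun v => ?_⟩
  · exact two_le_hDist_iff.2
      (hQsep i hi _ ((hf i hi).2 hu) _ ((hf i hi).2 hv) fun h => huv ((hf i hi).1 hu hv h))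
  · have hcross : ∀ u ∈ e i, ∀ v ∈ e (i + 1), f u = f v → u = v := fun u hu v hv h => by
      have hfu : f u ∈ Q i ∩ Q (i + 1) :=
        mem_inter.2 ⟨(hf i (by omega)).2 hu, h ▸ (hf _ hi).2 hv⟩
      rw [hQc i hi, mem_singleton, ← hfw i hi] at hfu
      rw [(hf i (by omega)).1 hu (hP.w_mem_left hi) hfu,
        (hf _ hi).1 hv (hP.w_mem_right hi) (h ▸ hfu)]
    intro u hu v hv h
    rcases mem_union.1 hu with hu | hu <;> rcases mem_union.1 hv with hv | hv
    exacts [(hf i (by omega)).1 hu hv h, hcross u hu v hv h, (hcross v hv u hu h.symm).symm,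
      (hf _ hi).1 hu hv h]
  · obtain ⟨i, hi, hv⟩ := hP.exists_mem v
    exact ⟨i, hi, (hf i hi).2 hv⟩

theorem exists_isLColoring_le_two_mul_sub_two (hP : IsHyperpath E r 1 e w) :
    ∃ f, IsLColoring E 2 1 f ∧ ∀ v, f v ≤ 2 * r - 2 := by
  obtain ⟨f, hf, hfQ⟩ := hP.exists_isLColoring_of_palettes (fun _ => arithProg 0 r) (fun _ => 0)
    (fun _ _ => card_arithProg 0 r)
    (fun _ _ a ha b hb _ => by rw [mem_arithProg] at ha hb; omega)
    (fun i hi => by omega) (fun i hi => by omega)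
  refine ⟨f, hf, fun v => ?_⟩
  obtain ⟨i, -, hv⟩ := hfQ v
  rw [mem_arithProg] at hv
  omega

theorem exists_isLColoring_le_two_mul_sub_one (hP : IsHyperpath E r 2 e w) (hr : 1 ≤ r) :
    ∃ f, IsLColoring E 2 1 f ∧ ∀ v, f v ≤ 2 * r - 1 := by
  set Q : ℕ → Finset ℕ := fun i =>
    if i = 0 then arithProg 0 r else insert 0 (arithProg 3 (r - 1))
  have hmem : ∀ i x, x ∈ Q i ↔ (i = 0 ∧ x < 2 * r ∧ x % 2 = 0) ∨
      (i ≠ 0 ∧ (x = 0 ∨ 3 ≤ x ∧ x < 2 * r + 1 ∧ x % 2 = 1)) := fun i x => by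
    simp only [Q]
    split_ifs <;> simp only [mem_insert, mem_arithProg] <;> omega
  obtain ⟨f, hf, hfQ⟩ := hP.exists_isLColoring_of_palettes Q (fun _ => 0)
    (fun i _ => by
      simp only [Q]
      split_ifs
      · exact card_arithProg 0 r
      · rw [card_insert_of_notMem (by rw [mem_arithProg]; omega), card_arithProg]
        omega)
    (fun i _ a ha b hb _ => by rw [hmem] at ha hb; omega)
    (fun i hi => by ext x; rw [mem_inter, hmem, hmem, mem_singleton]; omega)
    (fun i hi => by omega)
  refine ⟨f, hf, fun v => ?_⟩
  obtain ⟨i, -, hv⟩ := hfQ v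
  rw [hmem] at hv
  omega

theorem exists_isLColoring_le_two_mul (hP : IsHyperpath E r m e w) (hr : 3 ≤ r) :
    ∃ f, IsLColoring E 2 1 f ∧ ∀ v, f v ≤ 2 * r := by
  obtain ⟨f, hf, hfQ⟩ := hP.exists_isLColoring_of_palettes (pathPalette r) (pathCutColour r)
    (fun i _ => card_pathPalette hr i) (fun i _ => twoSeparated_pathPalette hr i)
    (fun i _ => pathPalette_inter_succ hr i) (fun i _ => pathCutColour_ne_succ hr i)
  refine ⟨f, hf, fun v => ?_⟩
  obtain ⟨i, -, hv⟩ := hfQ v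
  rw [mem_pathPalette] at hv
  omega

end IsHyperpath

/-- For an `r`-uniform hyperpath `P^m_r` with `r ≥ 3`:
`λ(P^m_r) = 2r - 2` if `m = 1`, `2r - 1` if `m = 2`, and `2r` if `m ≥ 3`. -/
theorem lamL_hyperpath {V : Type*} [Fintype V] (E : Finset (Finset V))
    (r m : ℕ) (e : ℕ → Finset V) (w : ℕ → V)
    (hr : 3 ≤ r) (hm : 1 ≤ m)
    (hpath : IsHyperpath E r m e w) :
    lamL E 2 1 = if m = 1 then 2 * r - 2 else if m = 2 then 2 * r - 1 else 2 * r := by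
  obtain rfl | rfl | hm3 : m = 1 ∨ m = 2 ∨ 3 ≤ m := by omega
  · exact lamL_eq_of_isLColoring hpath.exists_isLColoring_le_two_mul_sub_two
      fun f _ _ hf hb => hpath.two_mul_sub_two_le le_rfl hf hb
  · exact lamL_eq_of_isLColoring (hpath.exists_isLColoring_le_two_mul_sub_one (by omega))
      fun f _ _ hf hb => hpath.two_mul_sub_one_le (by omega) le_rfl hf hb
  · rw [if_neg (by omega), if_neg (by omega)]
    exact lamL_eq_of_isLColoring (hpath.exists_isLColoring_le_two_mul hr)
      fun f _ _ hf hb => hpath.two_mul_le hr hm3 hf hb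
end
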